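/- arXiv:2006.08910 — 3 statements merged into one kernel-verified Lean document; each statement's English description precedes it below -/
import Mathlib

section
/- There exists a finite-horizon MDP with horizon 2 and three policies π₀, π₁, π₂ such that, under noiseless trajectory comparisons (a trajectory τ is preferred to τ' if and only if its total reward is strictly larger), the preference probabilities satisfy φ(π₀,π₁) < 0, φ(π₁,π₂) < 0, and φ(π₂,π₀) < 0, i.e., policy preferences are non-transitive. Concretely: from start state s₀ with reward 0, action a₀ leads with probability 0.2 to a state of reward 1 and with probability 0.8 to a state of reward 0.01; action a₁ leads with probability 1 to a state of reward 0.02; action a₂ leads with probability 0.6 to a state of reward 0.5 and with probability 0.4 to a state of reward 0. With πᵢ(s₀)=aᵢ, one has φ(π₀,π₁) = -0.3, φ(π₁,π₂) = -0.1, φ(π₂,π₀) = -0.02, where φ(π,π') = Pr[trajectory of π beats trajectory of π'] - 1/2. -/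
open Finset

/-- Win probability of distribution `p` over distribution `q` under noiseless
comparisons: a trajectory beats another iff its total reward is strictly larger.
Each distribution is given by finitely many (probability, total reward) outcomes. -/
noncomputable def winProb {n m : ℕ} (p : Fin n → ℝ × ℝ) (q : Fin m → ℝ × ℝ) : ℝ :=
  ∑ i, ∑ j, (p i).1 * (q j).1 * (if (q j).2 < (p i).2 then (1 : ℝ) else 0)

/-- Preference φ(p,q) = Pr[p's trajectory beats q's trajectory] - 1/2. -/
noncomputable def pref {n m : ℕ} (p : Fin n → ℝ × ℝ) (q : Fin m → ℝ × ℝ) : ℝ :=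
  winProb p q - 1/2

/-! Each policy `πᵢ` plays `aᵢ` at `s₀`; since `r(s₀) = 0`, the total reward of a trajectory
is the reward of the state it reaches, so a policy is recorded by its two
(probability, total reward) outcomes. -/

noncomputable def rewardDist₀ : Fin 2 → ℝ × ℝ := ![(0.2, 1), (0.8, 0.01)]

noncomputable def rewardDist₁ : Fin 2 → ℝ × ℝ := ![(1, 0.02), (0, 0)]

noncomputable def rewardDist₂ : Fin 2 → ℝ × ℝ := ![(0.6, 0.5), (0.4, 0)]

theorem winProb_fin_two (p q : Fin 2 → ℝ × ℝ) :
    winProb p q =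
      (p 0).1 * (q 0).1 * (if (q 0).2 < (p 0).2 then 1 else 0) +
      (p 0).1 * (q 1).1 * (if (q 1).2 < (p 0).2 then 1 else 0) +
      ((p 1).1 * (q 0).1 * (if (q 0).2 < (p 1).2 then 1 else 0) +
      (p 1).1 * (q 1).1 * (if (q 1).2 < (p 1).2 then 1 else 0)) := by
  simp only [winProb, Fin.sum_univ_two]

theorem pref_rewardDist₀_rewardDist₁ : pref rewardDist₀ rewardDist₁ = -0.3 := by
  rw [pref, winProb_fin_two]
  norm_num [rewardDist₀, rewardDist₁]

theorem pref_rewardDist₁_rewardDist₂ : pref rewardDist₁ rewardDist₂ = -0.1 := by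
  rw [pref, winProb_fin_two]
  norm_num [rewardDist₁, rewardDist₂]

theorem pref_rewardDist₂_rewardDist₀ : pref rewardDist₂ rewardDist₀ = -0.02 := by
  rw [pref, winProb_fin_two]
  norm_num [rewardDist₂, rewardDist₀]

/-- Proposition 1: there is a horizon-2 MDP (encoded by the trajectory-reward
distributions of three policies from the start state) such that, under noiseless
trajectory comparisons, the policy preferences are non-transitive:
φ(π₀,π₁) = -0.3 < 0, φ(π₁,π₂) = -0.1 < 0, φ(π₂,π₀) = -0.02 < 0.
Concretely π₀ yields reward 1 w.p. 0.2 and 0.01 w.p. 0.8, π₁ yields 0.02 surely,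
π₂ yields 0.5 w.p. 0.6 and 0 w.p. 0.4. -/
theorem nontransitive_preferences :
    ∃ p₀ p₁ p₂ : Fin 2 → ℝ × ℝ,
      (∀ i, 0 ≤ (p₀ i).1) ∧ (∀ i, 0 ≤ (p₁ i).1) ∧ (∀ i, 0 ≤ (p₂ i).1) ∧
      (∑ i, (p₀ i).1 = 1) ∧ (∑ i, (p₁ i).1 = 1) ∧ (∑ i, (p₂ i).1 = 1) ∧
      p₀ = ![(0.2, 1), (0.8, 0.01)] ∧
      p₁ = ![(1, 0.02), (0, 0)] ∧
      p₂ = ![(0.6, 0.5), (0.4, 0)] ∧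
      pref p₀ p₁ = -0.3 ∧ pref p₁ p₂ = -0.1 ∧ pref p₂ p₀ = -0.02 ∧
      pref p₀ p₁ < 0 ∧ pref p₁ p₂ < 0 ∧ pref p₂ p₀ < 0 := by
  have h₀₁ := pref_rewardDist₀_rewardDist₁
  have h₁₂ := pref_rewardDist₁_rewardDist₂
  have h₂₀ := pref_rewardDist₂_rewardDist₀
  refine ⟨rewardDist₀, rewardDist₁, rewardDist₂, ?_, ?_, ?_, ?_, ?_, ?_, rfl, rfl, rfl,
    h₀₁, h₁₂, h₂₀, by rw [h₀₁]; norm_num, by rw [h₁₂]; norm_num, by rw [h₂₀]; norm_num⟩ <;>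
  norm_num [Fin.forall_fin_two, rewardDist₀, rewardDist₁, rewardDist₂]
end

section
/- Let π̂ be a non-stationary policy and let S̃ = {s ∈ S : μ(s) ≥ ε/(2S)} where μ(s) is the maximum probability of reaching s over all policies and S = |S|. Suppose for every step h and every s ∈ S̃ ∩ S_h, v_h^{ã*∘π̂_{h+1:H}}(s) - v_h^{π̂_{h:H}}(s) ≤ ε/(2H). Then v^{π*}(s₀) - v^{π̂}(s₀) ≤ ε. -/
open Finset

/-- Value of a non-stationary policy `π` with `n` remaining steps, at current step `h`
and state `s`. -/
noncomputable def val {S A : Type*} [Fintype S] (p : S → A → S → ℝ) (r : S → A → ℝ)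
    (π : ℕ → S → A) : ℕ → ℕ → S → ℝ
  | 0, _, _ => 0
  | n + 1, h, s => r s (π h s) + ∑ s' : S, p s (π h s) s' * val p r π n (h + 1) s'

/-- State distribution at step `h` induced by policy `π` from start state `s₀`. -/
noncomputable def stDist {S A : Type*} [Fintype S] [DecidableEq S]
    (p : S → A → S → ℝ) (π : ℕ → S → A) (s₀ : S) : ℕ → S → ℝ
  | 0, s => if s = s₀ then 1 else 0
  | h + 1, s' => ∑ s : S, stDist p π s₀ h s * p s (π h s) s'

/-- The policy `a ∘ π_{h+1:H}`: take action `a` at step `h`, then follow `π`. -/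
def actHyb {S A : Type*} (a : A) (π : ℕ → S → A) (h : ℕ) : ℕ → S → A :=
  fun t s => if t = h then a else π t s

/-!
By the performance difference lemma, `v^{π*}(s₀) - v^{π̂}(s₀)` is the sum over the steps `h < H`
of the expected advantage of `π*(s)` over `π̂` at `s`, with `s` drawn from the state distribution
of `π*` at step `h`. At good states the advantage is at most `ε/(2H)`, which contributes at most
`ε/2` over the `H` steps. At a bad state it is at most `1`; since the MDP is layered, a state is
visited at a single step only, so its weight summed over all steps is at most `μ(s) < ε/(2S)`,
and the at most `S` bad states contribute at most `ε/2`.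
-/

section MDP

variable {S A : Type*} [Fintype S] (p : S → A → S → ℝ) (r : S → A → ℝ)

lemma val_actHyb_of_lt (π : ℕ → S → A) (a : A) {h : ℕ} :
    ∀ n t, h < t → ∀ s, val p r (actHyb a π h) n t s = val p r π n t s
  | 0, _, _, _ => rfl
  | n + 1, t, ht, s => by
    have hπ : actHyb a π h t = π t := funext fun _ => if_neg ht.ne'
    simp only [_root_.val, hπ, val_actHyb_of_lt π a n (t + 1) (Nat.lt_succ_of_lt ht)]

lemma val_actHyb_succ_self (π : ℕ → S → A) (a : A) (n h : ℕ) (s : S) :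
    val p r (actHyb a π h) (n + 1) h s
      = r s a + ∑ s' : S, p s a s' * val p r π n (h + 1) s' := by
  have ha : actHyb a π h h s = a := if_pos rfl
  simp only [_root_.val, ha, val_actHyb_of_lt p r π a n (h + 1) h.lt_succ_self]

noncomputable def advantage (π : ℕ → S → A) (a : A) (n h : ℕ) (s : S) : ℝ :=
  val p r (actHyb a π h) n h s - val p r π n h s

lemma val_sub_val_succ (π π' : ℕ → S → A) (n h : ℕ) (s : S) :
    val p r π' (n + 1) h s - val p r π (n + 1) h s
      = advantage p r π (π' h s) (n + 1) h s
        + ∑ s' : S, p s (π' h s) s' * (val p r π' n (h + 1) s' - val p r π n (h + 1) s') := by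
  simp only [advantage, val_actHyb_succ_self, mul_sub, sum_sub_distrib]
  simp only [_root_.val]
  ring

variable [DecidableEq S]

lemma stDist_nonneg (hp0 : ∀ s a s', 0 ≤ p s a s') (π : ℕ → S → A) (s₀ : S) :
    ∀ h s, 0 ≤ stDist p π s₀ h s
  | 0, s => by simp only [stDist]; split_ifs <;> norm_num
  | h + 1, _ => sum_nonneg fun s _ => mul_nonneg (stDist_nonneg hp0 π s₀ h s) (hp0 _ _ _)

lemma sum_stDist (hp1 : ∀ s a, ∑ s' : S, p s a s' = 1) (π : ℕ → S → A) (s₀ : S) :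
    ∀ h, ∑ s : S, stDist p π s₀ h s = 1
  | 0 => by simp [stDist]
  | h + 1 => by
    simp only [stDist]
    rw [sum_comm]
    simp only [← mul_sum, hp1, mul_one, sum_stDist hp1 π s₀ h]

lemma sum_stDist_succ_mul (π : ℕ → S → A) (s₀ : S) (h : ℕ) (x : S → ℝ) :
    ∑ s' : S, stDist p π s₀ (h + 1) s' * x s'
      = ∑ s : S, stDist p π s₀ h s * ∑ s' : S, p s (π h s) s' * x s' := by
  simp only [stDist, sum_mul, mul_sum]
  rw [sum_comm]
  exact sum_congr rfl fun _ _ => sum_congr rfl fun _ _ => mul_assoc _ _ _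

/-- Performance difference lemma, started at step `h`. -/
lemma sum_stDist_mul_val_sub_val (π π' : ℕ → S → A) (s₀ : S) :
    ∀ n h, ∑ s : S, stDist p π' s₀ h s * (val p r π' n h s - val p r π n h s)
      = ∑ k ∈ range n, ∑ s : S,
          stDist p π' s₀ (h + k) s * advantage p r π (π' (h + k) s) (n - k) (h + k) s
  | 0, _ => by simp [_root_.val]
  | n + 1, h => by
    simp only [val_sub_val_succ, mul_add, sum_add_distrib, ← sum_stDist_succ_mul,
      sum_stDist_mul_val_sub_val π π' s₀ n (h + 1), sum_range_succ' _ n, add_zero,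
      Nat.sub_zero, Nat.add_sub_add_right, add_assoc, add_comm 1]
    ring

theorem val_sub_val_eq_sum_advantage (π π' : ℕ → S → A) (s₀ : S) (n : ℕ) :
    val p r π' n 0 s₀ - val p r π n 0 s₀
      = ∑ k ∈ range n, ∑ s : S,
          stDist p π' s₀ k s * advantage p r π (π' k s) (n - k) k s := by
  simpa [stDist] using sum_stDist_mul_val_sub_val p r π π' s₀ n 0

end MDP

section RareStates

variable {S : Type*} [Fintype S]

lemma sum_range_le_of_eq_zero_of_ne {d : ℕ → ℝ} {m : ℝ} (ℓ : ℕ) (hd : ∀ h, ℓ ≠ h → d h = 0)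
    (hdℓ : d ℓ ≤ m) (hm : 0 ≤ m) (H : ℕ) : ∑ h ∈ range H, d h ≤ m := by
  by_cases hℓ : ℓ ∈ range H
  · rwa [sum_eq_single_of_mem ℓ hℓ fun h _ hne => hd h hne.symm]
  · rwa [sum_eq_zero fun h hh => hd h fun h' => hℓ (h' ▸ hh)]

lemma mul_le_mul_add_ite {d g δ τ μ : ℝ} (hd : 0 ≤ d) (hδ : 0 ≤ δ) (hg : g ≤ 1)
    (hgood : τ ≤ μ → g ≤ δ) : d * g ≤ d * δ + if τ ≤ μ then 0 else d := by
  split_ifs with hμ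
  · simpa using mul_le_mul_of_nonneg_left (hgood hμ) hd
  · nlinarith [mul_nonneg hd hδ]

/-- The states with `τ ≤ μ s` cost at most `δ` per step; each of the others costs at most
`τ` in total, since its weight summed over all steps is at most `μ s < τ`. -/
lemma sum_sum_mul_le_of_rare (d g : ℕ → S → ℝ) (μ : S → ℝ) (H : ℕ) {δ τ : ℝ}
    (hd0 : ∀ h s, 0 ≤ d h s) (hd1 : ∀ h, ∑ s, d h s ≤ 1)
    (hμ : ∀ s, ∑ h ∈ range H, d h s ≤ μ s) (hδ : 0 ≤ δ) (hτ : 0 ≤ τ)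
    (hg1 : ∀ h < H, ∀ s, g h s ≤ 1) (hgood : ∀ h < H, ∀ s, τ ≤ μ s → g h s ≤ δ) :
    ∑ h ∈ range H, ∑ s, d h s * g h s ≤ H * δ + Fintype.card S * τ := by
  have hpoint : ∀ h ∈ range H, ∀ s, d h s * g h s ≤ d h s * δ + if τ ≤ μ s then 0 else d h s :=
    fun h hh s => mul_le_mul_add_ite (hd0 h s) hδ (hg1 h (mem_range.1 hh) s)
      (hgood h (mem_range.1 hh) s)
  have hspread : ∑ h ∈ range H, ∑ s, d h s * δ ≤ H * δ := by
    have hmass : ∑ h ∈ range H, ∑ s, d h s ≤ H := by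
      simpa using sum_le_card_nsmul (range H) _ 1 fun h _ => hd1 h
    simpa only [← sum_mul] using mul_le_mul_of_nonneg_right hmass hδ
  have hrare : ∑ h ∈ range H, ∑ s, (if τ ≤ μ s then 0 else d h s) ≤ Fintype.card S * τ := by
    rw [sum_comm]
    simpa using sum_le_card_nsmul univ _ τ fun s _ => by
      split_ifs with hs
      · simpa using hτ
      · exact (hμ s).trans (not_le.1 hs).le
  calc ∑ h ∈ range H, ∑ s, d h s * g h s
      ≤ ∑ h ∈ range H, ∑ s, (d h s * δ + if τ ≤ μ s then 0 else d h s) :=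
        sum_le_sum fun h hh => sum_le_sum fun s _ => hpoint h hh s
    _ ≤ H * δ + Fintype.card S * τ := by
        simp only [sum_add_distrib]
        exact add_le_add hspread hrare

end RareStates

/-- Suboptimality bound up to hard-to-reach states.  Layered MDP with `|S| = card S`
states, values in [0,1]; `μ s` dominates the reach probability of `s` under every
policy, and each state is only reachable at its own layer `ℓ s`.  Let
S̃ = {s : μ(s) ≥ ε/(2S)}.  If at every step h < H and every good state s ∈ S̃ the
policy π̂ satisfies v_h^{a∘π̂_{h+1:H}}(s) - v_h^{π̂_{h:H}}(s) ≤ ε/(2H) for every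
action a (in particular the argmax one), then v^{π*}(s₀) - v^{π̂}(s₀) ≤ ε. -/
theorem eps_optimal_up_to_rare_states {S A : Type*} [Fintype S] [DecidableEq S]
    (p : S → A → S → ℝ) (r : S → A → ℝ)
    (hp0 : ∀ s a s', 0 ≤ p s a s') (hp1 : ∀ s a, ∑ s' : S, p s a s' = 1)
    (H : ℕ) (hH : 0 < H) (s₀ : S) (ε : ℝ) (hε : 0 < ε)
    (μ : S → ℝ) (ℓ : S → ℕ)
    (hμ : ∀ (π : ℕ → S → A) (h : ℕ) (s : S), stDist p π s₀ h s ≤ μ s)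
    (hlayer : ∀ (π : ℕ → S → A) (h : ℕ) (s : S), ℓ s ≠ h → stDist p π s₀ h s = 0)
    (hvb : ∀ (π : ℕ → S → A) (h : ℕ) (s : S), h < H →
      val p r π (H - h) h s ∈ Set.Icc (0 : ℝ) 1)
    (πhat : ℕ → S → A)
    (hgood : ∀ h < H, ∀ s : S, ε / (2 * (Fintype.card S)) ≤ μ s → ∀ a : A,
      val p r (actHyb a πhat h) (H - h) h s - val p r πhat (H - h) h s ≤ ε / (2 * H)) :
    ∀ πstar : ℕ → S → A, val p r πstar H 0 s₀ - val p r πhat H 0 s₀ ≤ ε := by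
  intro πstar
  have hcard : (0 : ℝ) < Fintype.card S := by exact_mod_cast Fintype.card_pos_iff.2 ⟨s₀⟩
  have hreach : ∀ s, ∑ h ∈ range H, stDist p πstar s₀ h s ≤ μ s := fun s =>
    sum_range_le_of_eq_zero_of_ne (ℓ s) (hlayer πstar · s) (hμ πstar _ s)
      ((stDist_nonneg p hp0 πstar s₀ 0 s).trans (hμ πstar 0 s)) H
  have hadv : ∀ h < H, ∀ s a, advantage p r πhat a (H - h) h s ≤ 1 := fun h hh s a => by
    have := (hvb (actHyb a πhat h) h s hh).2
    have := (hvb πhat h s hh).1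
    rw [advantage]
    linarith
  rw [val_sub_val_eq_sum_advantage]
  calc _ ≤ H * (ε / (2 * H)) + Fintype.card S * (ε / (2 * Fintype.card S)) :=
        sum_sum_mul_le_of_rare _ (fun h s => advantage p r πhat (πstar h s) (H - h) h s) μ H
          (stDist_nonneg p hp0 πstar s₀) (fun h => (sum_stDist p hp1 πstar s₀ h).le) hreach
          (by positivity) (by positivity) (fun h hh s => hadv h hh s _)
          (fun h hh s hs => hgood h hh s hs _)
    _ = ε := by field_simp; ring
end

section
/- Let μ, C, L, A, H > 0 and suppose the regret inequality μN₀ - N ≤ C(√(μ S A H N₀ L) + √S · S A H² L³ (√S + √H)) holds. If additionally μ ≥ ε/(2S) and N₀ ≥ c₀ S³ A H² L³ / ε for a sufficiently large constant c₀ (depending only on C), then N ≥ μN₀/2. That is, a sublinear regret bound for the synthetic reward forces visiting the target state at least half as often as the best possible rate. -/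
/-!
Write `P = μ N₀` and `B = S² A H² L³`. The two hypotheses on `μ` and `N₀` multiply to
`P ≥ (c₀ / 2) B`, and with `c₀ = 32 C² + 16 C` this makes each of the two regret terms at most
`P / 4`: the first because `C √(S A H L · P) ≤ P / 4` as soon as `16 C² S A H L ≤ P`, the second
because `√S (√S + √H) ≤ 2 S`. Hence `P - N ≤ P / 2`.
-/

lemma mul_sqrt_mul_le_div_four {C a P : ℝ} (hC : 0 ≤ C) (hP : 0 ≤ P)
    (h : 16 * C ^ 2 * a ≤ P) : C * √(a * P) ≤ P / 4 := by
  rw [← Real.sqrt_sq hC, ← Real.sqrt_mul (sq_nonneg C), ← Real.sqrt_sq (by positivity : 0 ≤ P / 4)]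
  apply Real.sqrt_le_sqrt
  nlinarith

lemma sqrt_mul_sqrt_add_sqrt_le {S H : ℝ} (hS : 0 ≤ S) (hHS : H ≤ S) :
    √S * (√S + √H) ≤ 2 * S := by
  nlinarith [Real.sqrt_le_sqrt hHS, Real.mul_self_sqrt hS, Real.sqrt_nonneg S]

lemma mul_div_two_le_mul_of_le_of_le {ε S μ N₀ c K : ℝ} (hε : 0 < ε) (hS : 0 < S) (hc : 0 ≤ c)
    (hK : 0 ≤ K) (hμ : ε / (2 * S) ≤ μ) (hN₀ : c * S * K / ε ≤ N₀) : c * K / 2 ≤ μ * N₀ :=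
  calc c * K / 2 = ε / (2 * S) * (c * S * K / ε) := by field_simp
    _ ≤ μ * N₀ := mul_le_mul hμ hN₀ (by positivity) ((by positivity : 0 ≤ ε / (2 * S)).trans hμ)

lemma mul_le_sq_mul_mul_sq_mul_cube {S A H L : ℝ} (hS : 1 ≤ S) (hA : 0 ≤ A) (hH : 1 ≤ H)
    (hL : 1 ≤ L) : S * A * H * L ≤ S ^ 2 * A * H ^ 2 * L ^ 3 :=
  calc S * A * H * L ≤ (S * H * L ^ 2) * (S * A * H * L) :=
        le_mul_of_one_le_left (by positivity)
          (one_le_mul_of_one_le_of_one_le (one_le_mul_of_one_le_of_one_le hS hH) (one_le_pow₀ hL))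
    _ = S ^ 2 * A * H ^ 2 * L ^ 3 := by ring

/-- Algebraic consequence of the EULER regret bound: for every constant C > 0 there is a
constant c₀ > 0 (depending only on C) such that, whenever 1 ≤ A, L, 1 ≤ H ≤ S, 0 < ε,
0 < μ ≤ 1, 0 ≤ N, the regret inequality
μ·N₀ - N ≤ C(√(μ·S·A·H·N₀·L) + √S·S·A·H²·L³·(√S + √H)) holds, μ ≥ ε/(2S), and
N₀ ≥ c₀·S³·A·H²·L³/ε, then N ≥ μ·N₀/2: sublinear regret for the synthetic reward
forces visiting the target state at least half as often as the best possible rate. -/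
theorem euler_regret_forces_visits (C : ℝ) (hC : 0 < C) :
    ∃ c₀ : ℝ, 0 < c₀ ∧
      ∀ μ S A H L ε N₀ N : ℝ,
        1 ≤ A → 1 ≤ L → 1 ≤ H → H ≤ S → 0 < ε → 0 < μ → μ ≤ 1 → 0 ≤ N →
        μ * N₀ - N ≤ C * (Real.sqrt (μ * S * A * H * N₀ * L) +
          Real.sqrt S * S * A * H ^ 2 * L ^ 3 * (Real.sqrt S + Real.sqrt H)) →
        ε / (2 * S) ≤ μ →
        c₀ * S ^ 3 * A * H ^ 2 * L ^ 3 / ε ≤ N₀ →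
        μ * N₀ / 2 ≤ N := by
  refine ⟨32 * C ^ 2 + 16 * C, by positivity, ?_⟩
  intro μ S A H L ε N₀ N hA hL hH hHS hε _ _ _ hregret hμε hN₀
  have hS1 : 1 ≤ S := hH.trans hHS
  have hS : 0 < S := by linarith
  set B := S ^ 2 * A * H ^ 2 * L ^ 3
  have hB : 0 ≤ B := by positivity
  have hP : (32 * C ^ 2 + 16 * C) * B / 2 ≤ μ * N₀ :=
    mul_div_two_le_mul_of_le_of_le hε hS (by positivity) hB hμε
      (by convert hN₀ using 2; ring)
  have hSAHL : S * A * H * L ≤ B := mul_le_sq_mul_mul_sq_mul_cube hS1 (by linarith) hH hL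
  have hfirst : C * √(μ * S * A * H * N₀ * L) ≤ μ * N₀ / 4 := by
    rw [show μ * S * A * H * N₀ * L = S * A * H * L * (μ * N₀) by ring]
    refine mul_sqrt_mul_le_div_four hC.le (le_trans (by positivity) hP) ?_
    nlinarith [mul_le_mul_of_nonneg_left hSAHL (by positivity : (0 : ℝ) ≤ 16 * C ^ 2)]
  have hsecond : C * (√S * S * A * H ^ 2 * L ^ 3 * (√S + √H)) ≤ μ * N₀ / 4 :=
    calc C * (√S * S * A * H ^ 2 * L ^ 3 * (√S + √H))
        = C * (S * A * H ^ 2 * L ^ 3) * (√S * (√S + √H)) := by ring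
      _ ≤ C * (S * A * H ^ 2 * L ^ 3) * (2 * S) :=
          mul_le_mul_of_nonneg_left (sqrt_mul_sqrt_add_sqrt_le hS.le hHS) (by positivity)
      _ = 2 * C * B := by ring
      _ ≤ μ * N₀ / 4 := by nlinarith [mul_nonneg (sq_nonneg C) hB]
  linarith
end
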